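/- There is no orderly coin system of the form (1, 2, b, a, a+1, 2a) with 4 < b < a and a ≤ 2b: for any such parameters the value a + b is a counterexample. -/

import Mathlib

/-- The largest coin value in `C` that is at most `v` (or 0 if none). -/
def coinMax (C : List ℕ) (v : ℕ) : ℕ := (C.filter (· ≤ v)).foldr max 0

/-- Fuelled greedy coin count. -/
def grdAux (C : List ℕ) : ℕ → ℕ → ℕ
  | 0, _ => 0
  | fuel + 1, v =>
    let c := coinMax C v
    if v = 0 ∨ c = 0 then 0 else 1 + grdAux C fuel (v - c)

/-- Number of coins used by the greedy algorithm to represent `v` with coin system `C`. -/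
def grd (C : List ℕ) (v : ℕ) : ℕ := grdAux C v v

/-- The set of sizes of representations of `v` as nonnegative integer combinations of
the coin values in `C`. -/
def reprCosts (C : List ℕ) (v : ℕ) : Set ℕ :=
  {k | ∃ x : List ℕ, x.length = C.length ∧ (List.zipWith (· * ·) x C).sum = v ∧ x.sum = k}

/-- Minimum number of coins needed to represent `v` with coin system `C`. -/
noncomputable def opt (C : List ℕ) (v : ℕ) : ℕ := sInf (reprCosts C v)

/-- A coin system is orderly if greedy is optimal for every positive value. -/
def Orderly (C : List ℕ) : Prop := ∀ v : ℕ, 0 < v → grd C v = opt C v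

/-!
The value `a + b` is paid with the two coins `a` and `b`. Greedy instead first takes `a + 1`
(since `a + 1 ≤ a + b < 2a`), which leaves `b - 1`, below every coin except `1` and `2`; it then
takes `2` and still has `b - 3 > 0` left, so it uses at least three coins.
-/

section CoinMax

variable {C : List ℕ} {v c : ℕ}

theorem coinMax_le_self : coinMax C v ≤ v :=
  List.max_le_of_forall_le _ _ fun _ hd => of_decide_eq_true (List.mem_filter.mp hd).2

theorem le_coinMax (hc : c ∈ C) (hcv : c ≤ v) : c ≤ coinMax C v :=
  List.le_max_of_le (List.mem_filter.mpr ⟨hc, decide_eq_true hcv⟩) le_rfl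

theorem coinMax_le (h : ∀ d ∈ C, d ≤ v → d ≤ c) : coinMax C v ≤ c :=
  List.max_le_of_forall_le _ _ fun d hd =>
    h d (List.mem_filter.mp hd).1 (of_decide_eq_true (List.mem_filter.mp hd).2)

theorem coinMax_eq (hc : c ∈ C) (hcv : c ≤ v) (h : ∀ d ∈ C, d ≤ v → d ≤ c) :
    coinMax C v = c :=
  le_antisymm (coinMax_le h) (le_coinMax hc hcv)

end CoinMax

section Greedy

variable {C : List ℕ}

theorem grdAux_succ_of_coinMax_pos {fuel v : ℕ} (hc : 0 < coinMax C v) :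
    grdAux C (fuel + 1) v = 1 + grdAux C fuel (v - coinMax C v) := by
  have hv : 0 < v := hc.trans_le coinMax_le_self
  simp only [grdAux, if_neg (show ¬(v = 0 ∨ coinMax C v = 0) by omega)]

/-- Every greedy step removes a positive coin, so any fuel `≥ v` lets the greedy run finish. -/
theorem grdAux_eq_of_le {fuel fuel' v : ℕ} (hf : v ≤ fuel) (hf' : v ≤ fuel') :
    grdAux C fuel v = grdAux C fuel' v := by
  induction fuel generalizing fuel' v with
  | zero => cases fuel' <;> simp [grdAux, show v = 0 by omega]
  | succ k ih =>
    cases fuel' with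
    | zero => simp [grdAux, show v = 0 by omega]
    | succ k' =>
      by_cases hc : coinMax C v = 0
      · simp [grdAux, hc]
      · have hcv := coinMax_le_self (C := C) (v := v)
        rw [grdAux_succ_of_coinMax_pos (by omega), grdAux_succ_of_coinMax_pos (by omega),
          ih (fuel' := k') (by omega) (by omega)]

theorem grd_eq_one_add {v : ℕ} (hc : 0 < coinMax C v) :
    grd C v = 1 + grd C (v - coinMax C v) := by
  obtain ⟨n, rfl⟩ : ∃ n, v = n + 1 := ⟨v - 1, by have := hc.trans_le coinMax_le_self; omega⟩
  rw [grd, grdAux_succ_of_coinMax_pos hc, grd, grdAux_eq_of_le (by omega) le_rfl]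

theorem grd_pos_of_one_mem {v : ℕ} (hC : 1 ∈ C) (hv : 0 < v) : 0 < grd C v := by
  rw [grd_eq_one_add (le_coinMax hC hv)]
  omega

end Greedy

theorem not_orderly_of_opt_lt_grd {C : List ℕ} {v : ℕ} (hv : 0 < v) (h : opt C v < grd C v) :
    ¬ Orderly C :=
  fun hC => h.ne' (hC v hv)

theorem stmt_15 (a b : ℕ) (hb : 4 < b) (hba : b < a) (hab : a ≤ 2 * b) :
    ¬ Orderly [1, 2, b, a, a + 1, 2 * a] ∧
    opt [1, 2, b, a, a + 1, 2 * a] (a + b) <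
      grd [1, 2, b, a, a + 1, 2 * a] (a + b) := by
  set C : List ℕ := [1, 2, b, a, a + 1, 2 * a] with hC
  have hopt : opt C (a + b) ≤ 2 :=
    Nat.sInf_le ⟨[0, 0, 1, 1, 0, 0], rfl, by simp [hC, add_comm], rfl⟩
  have hfirst : coinMax C (a + b) = a + 1 :=
    coinMax_eq (by simp [hC]) (by omega) fun d hd _ => by
      simp only [hC, List.mem_cons, List.not_mem_nil, or_false] at hd; omega
  have hsecond : coinMax C (b - 1) = 2 :=
    coinMax_eq (by simp [hC]) (by omega) fun d hd _ => by
      simp only [hC, List.mem_cons, List.not_mem_nil, or_false] at hd; omega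
  have hgrd : grd C (a + b) = 2 + grd C (b - 3) := by
    rw [grd_eq_one_add (by omega), hfirst, show a + b - (a + 1) = b - 1 by omega,
      grd_eq_one_add (by omega), hsecond, show b - 1 - 2 = b - 3 by omega]
    omega
  have hlt : opt C (a + b) < grd C (a + b) := by
    have := grd_pos_of_one_mem (C := C) (by simp [hC]) (show 0 < b - 3 by omega)
    omega
  exact ⟨not_orderly_of_opt_lt_grd (by omega) hlt, hlt⟩
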